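/- Let T be a subgraph of a finite simple graph G, let (L,M) be a correspondence assignment for G, and suppose G is T-critical with respect to (L,M). Let (A,B) be a separation of G (i.e., A ∪ B = G and there are no edges of G between V(A) \ V(B) and V(B) \ V(A)) such that T ⊆ A and B is not contained in A. Then the induced subgraph G[V(B)] is A[V(A) ∩ V(B)]-critical with respect to (L,M). -/

import Mathlib

/-- A partial matching: each first coordinate and each second coordinate
occurs in at most one pair. -/
def PartialMatching {α β : Type*} (S : Finset (α × β)) : Prop :=
  ∀ p ∈ S, ∀ q ∈ S, (p.1 = q.1 → p = q) ∧ (p.2 = q.2 → p = q)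

/-- `(L, M)` is a correspondence assignment for `G`: for each edge `uv`,
`M u v` is a partial matching between `L u` and `L v`, symmetric in `u, v`. -/
def GoodCorr {V : Type*} (G : SimpleGraph V) (L : V → Finset ℕ)
    (M : V → V → Finset (ℕ × ℕ)) : Prop :=
  (∀ u v, ∀ p ∈ M u v, G.Adj u v ∧ p.1 ∈ L u ∧ p.2 ∈ L v) ∧
  (∀ u v, PartialMatching (M u v)) ∧
  (∀ u v c d, (c, d) ∈ M u v ↔ (d, c) ∈ M v u)

/-- An `(L, M)`-colouring of `G`. -/
def CorrColouring {V : Type*} (G : SimpleGraph V) (L : V → Finset ℕ)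
    (M : V → V → Finset (ℕ × ℕ)) (φ : V → ℕ) : Prop :=
  (∀ v, φ v ∈ L v) ∧ ∀ u v, G.Adj u v → (φ u, φ v) ∉ M u v

/-- An `(L, M)`-colouring of the subgraph `H` of `G`. -/
def ColouringOn {V : Type*} {G : SimpleGraph V} (L : V → Finset ℕ)
    (M : V → V → Finset (ℕ × ℕ)) (H : G.Subgraph) (φ : V → ℕ) : Prop :=
  (∀ v ∈ H.verts, φ v ∈ L v) ∧ ∀ u v, H.Adj u v → (φ u, φ v) ∉ M u v

/-- The colouring `φ` of `S` extends to an `(L, M)`-colouring of `H`. -/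
def ExtendsTo {V : Type*} {G : SimpleGraph V} (L : V → Finset ℕ)
    (M : V → V → Finset (ℕ × ℕ)) (S H : G.Subgraph) (φ : V → ℕ) : Prop :=
  ∃ ψ : V → ℕ, ColouringOn L M H ψ ∧ ∀ v ∈ S.verts, ψ v = φ v

/-- `H` is `S`-critical with respect to `(L, M)`: `H ≠ S` and every proper
subgraph of `H` containing `S` admits a colouring of `S` that extends to it
but not to `H`. -/
def SCritical {V : Type*} {G : SimpleGraph V} (L : V → Finset ℕ)
    (M : V → V → Finset (ℕ × ℕ)) (S H : G.Subgraph) : Prop :=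
  S ≠ H ∧ ∀ H' : G.Subgraph, S ≤ H' → H' < H →
    ∃ φ : V → ℕ, ColouringOn L M S φ ∧ ExtendsTo L M S H' φ ∧ ¬ ExtendsTo L M S H φ

/-- `G` is `(L, M)`-critical: `G` itself has no `(L, M)`-colouring, but every
proper subgraph of `G` has one. -/
def CorrCritical {V : Type*} (G : SimpleGraph V) (L : V → Finset ℕ)
    (M : V → V → Finset (ℕ × ℕ)) : Prop :=
  (¬ ∃ φ, CorrColouring G L M φ) ∧
  ∀ H : G.Subgraph, H ≠ ⊤ → ∃ φ, ColouringOn L M H φ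


/-!
Since `A ⊔ B = G`, every edge of `G` lies in `A` or has both ends in `V(B)`. Hence a colouring
of `A` extends to `G` as soon as its restriction to `A ∩ B` extends to `G[V(B)]`: take it on
`V(A)` and the extension on `V(B) \ V(A)`. Given a proper subgraph `H'` of `G[V(B)]` containing
`A[V(A) ∩ V(B)]`, the subgraph `A ⊔ H'` is proper in `G` and contains `T`, so criticality of `G`
yields a colouring of `A ⊔ H'` whose restriction to `T` does not extend to `G`; by the gluing
argument its restriction to `A ∩ B` does not extend to `G[V(B)]` either.
-/

section

variable {V : Type*} {G : SimpleGraph V} {L : V → Finset ℕ} {M : V → V → Finset (ℕ × ℕ)}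

lemma ColouringOn.mono {H₁ H₂ : G.Subgraph} (h : H₁ ≤ H₂) {φ : V → ℕ}
    (hφ : ColouringOn L M H₂ φ) : ColouringOn L M H₁ φ :=
  ⟨fun v hv => hφ.1 v (h.1 hv), fun _ _ huv => hφ.2 _ _ (h.2 huv)⟩

namespace SimpleGraph.Subgraph

lemma induce_inter_le_left (A B : G.Subgraph) : A.induce (A.verts ∩ B.verts) ≤ A :=
  (induce_mono_right Set.inter_subset_left).trans induce_self_verts.le

lemma induce_top_le_of_sup_eq_top {A H : G.Subgraph} {s : Set V}
    (hAH : A.induce (A.verts ∩ s) ≤ H) (htop : A ⊔ H = ⊤) : (⊤ : G.Subgraph).induce s ≤ H := by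
  have hcover : ∀ {u v}, G.Adj u v → A.Adj u v ∨ H.Adj u v := fun huv => by
    rw [← sup_adj, htop, top_adj]; exact huv
  refine ⟨fun v hv => ?_, fun u v ⟨hu, hv, huv⟩ => ?_⟩
  · by_cases hvA : v ∈ A.verts
    · exact hAH.1 ⟨hvA, hv⟩
    · have : v ∈ (A ⊔ H).verts := htop ▸ trivial
      exact this.resolve_left hvA
  · rcases hcover huv with hA | hH
    · exact hAH.2 ⟨⟨A.edge_vert hA, hu⟩, ⟨A.edge_vert hA.symm, hv⟩, hA⟩
    · exact hH

end SimpleGraph.Subgraph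

open SimpleGraph.Subgraph

lemma extendsTo_top_of_sup_eq_top {A B : G.Subgraph} (hunion : A ⊔ B = ⊤) {ψ : V → ℕ}
    (hψ : ColouringOn L M A ψ)
    (hext : ExtendsTo L M (A.induce (A.verts ∩ B.verts)) ((⊤ : G.Subgraph).induce B.verts) ψ) :
    ExtendsTo L M A ⊤ ψ := by
  classical
  obtain ⟨σ, hσ, hσψ⟩ := hext
  have hcover : ∀ v, v ∈ (A ⊔ B).verts := fun v => hunion ▸ trivial
  set χ : V → ℕ := fun v => if v ∈ A.verts then ψ v else σ v
  have hχA : ∀ v ∈ A.verts, χ v = ψ v := fun v hv => if_pos hv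
  have hχB : ∀ v ∈ B.verts, χ v = σ v := fun v hvB => by
    by_cases hvA : v ∈ A.verts
    · exact (hχA v hvA).trans (hσψ v ⟨hvA, hvB⟩).symm
    · exact if_neg hvA
  refine ⟨χ, ⟨fun v _ => ?_, fun u v huv => ?_⟩, hχA⟩
  · rcases hcover v with hvA | hvB
    · exact hχA v hvA ▸ hψ.1 v hvA
    · exact hχB v hvB ▸ hσ.1 v hvB
  · have huv' : (A ⊔ B).Adj u v := hunion ▸ huv
    rcases huv' with hA | hB
    · rw [hχA u (A.edge_vert hA), hχA v (A.edge_vert hA.symm)]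
      exact hψ.2 u v hA
    · have hu := B.edge_vert hB
      have hv := B.edge_vert hB.symm
      rw [hχB u hu, hχB v hv]
      exact hσ.2 u v ⟨hu, hv, hB.adj_sub⟩

end

open SimpleGraph.Subgraph in
theorem stmt10_general {V : Type*} (G : SimpleGraph V)
    (L : V → Finset ℕ) (M : V → V → Finset (ℕ × ℕ))
    (T A B : G.Subgraph)
    (hcrit : SCritical L M T ⊤)
    (hunion : A ⊔ B = ⊤)
    (hTA : T ≤ A) (hBA : ¬ B ≤ A) :
    SCritical L M (A.induce (A.verts ∩ B.verts))
      ((⊤ : G.Subgraph).induce B.verts) := by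
  refine ⟨fun h => hBA ?_, fun H' hSH' hH' => ?_⟩
  · exact le_induce_top_verts.trans (h.symm.le.trans (induce_inter_le_left A B))
  have hW : A ⊔ H' < ⊤ :=
    lt_top_iff_ne_top.2 fun htop => hH'.not_ge (induce_top_le_of_sup_eq_top hSH' htop)
  obtain ⟨φ, -, ⟨ψ, hψ, hψφ⟩, hφ⟩ := hcrit.2 (A ⊔ H') (hTA.trans le_sup_left) hW
  refine ⟨ψ, hψ.mono ((induce_inter_le_left A B).trans le_sup_left),
    ⟨ψ, hψ.mono le_sup_right, fun _ _ => rfl⟩, fun hext => hφ ?_⟩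
  obtain ⟨χ, hχ, hχψ⟩ := extendsTo_top_of_sup_eq_top hunion (hψ.mono le_sup_left) hext
  exact ⟨χ, hχ, fun v hv => (hχψ v (hTA.1 hv)).trans (hψφ v hv)⟩

theorem stmt10 {V : Type*} [Fintype V] (G : SimpleGraph V)
    (L : V → Finset ℕ) (M : V → V → Finset (ℕ × ℕ)) (hG : GoodCorr G L M)
    (T A B : G.Subgraph)
    (hcrit : SCritical L M T ⊤)
    (hunion : A ⊔ B = ⊤)
    (hsep : ∀ u v : V, G.Adj u v → u ∈ A.verts → u ∉ B.verts →
      v ∈ B.verts → v ∈ A.verts)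
    (hTA : T ≤ A) (hBA : ¬ B ≤ A) :
    SCritical L M (A.induce (A.verts ∩ B.verts))
      ((⊤ : G.Subgraph).induce B.verts) :=
  stmt10_general G L M T A B hcrit hunion hTA hBA
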